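/- Let X and Y be finite nonempty sets and let f, f' : X → Y with f surjective. Then F(ρ_f, ρ_{f'})² ≤ (1/|X|) · Σ_{(y,y') ∈ Y × Y} |L_f(y) ∩ L_{f'}(y')|² / |L_f(y)|. -/

import Mathlib

/-!
Write `ρ_f = ∑_y p_y |ψ_y⟩⟨ψ_y|` with `ψ_y` the normalized indicator of the fiber `L_f(y)` and
`p_y = |L_f(y)|/|X|`; the `ψ_y` are orthonormal, so `√ρ_f = ∑_y √p_y |ψ_y⟩⟨ψ_y|`. The operator
`T = √(√ρ_f σ √ρ_f)` has `T² = √ρ_f σ √ρ_f` supported on `span {ψ_y}`, hence so is `T`, and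
`tr T = ∑_y ⟨ψ_y, T ψ_y⟩`. Cauchy–Schwarz gives `⟨ψ_y, T ψ_y⟩² ≤ ⟨ψ_y, T² ψ_y⟩ = p_y ⟨ψ_y, σ ψ_y⟩`,
and Cauchy–Schwarz over `y` with `∑_y p_y ≤ 1` gives `F(ρ_f, σ)² ≤ ∑_y ⟨ψ_y, σ ψ_y⟩`. For
`σ = ρ_{f'}` the right-hand side is `(1/|X|) ∑_{y,y'} |L_f(y) ∩ L_{f'}(y')|² / |L_f(y)|`.
-/

open Matrix BigOperators
open scoped ComplexOrder

/-- The positive semidefinite square root of a matrix (zero if the matrix is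
not positive semidefinite). -/
noncomputable def msqrt {n : Type*} [Fintype n] [DecidableEq n]
    (A : Matrix n n ℂ) : Matrix n n ℂ :=
  letI := Classical.dec A.PosSemidef
  if h : A.PosSemidef then
    (h.1.eigenvectorUnitary : Matrix n n ℂ) * diagonal ((↑) ∘ (√·) ∘ h.1.eigenvalues) *
      (star h.1.eigenvectorUnitary : Matrix n n ℂ) else 0

/-- The fidelity `F(ρ,σ) = tr √(√ρ σ √ρ)` of two (positive semidefinite) matrices. -/
noncomputable def fidelity {n : Type*} [Fintype n] [DecidableEq n]
    (ρ σ : Matrix n n ℂ) : ℝ :=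
  ((msqrt (msqrt ρ * σ * msqrt ρ)).trace).re

/-- The hiding state `ρ_f` of a function `f : X → Y`:
`(ρ_f)_{x,x'} = 1/|X|` if `f x = f x'` and `0` otherwise. -/
noncomputable def hidingState {X Y : Type*} [Fintype X] [DecidableEq Y]
    (f : X → Y) : Matrix X X ℂ :=
  Matrix.of fun x x' => if f x = f x' then (1 : ℂ) / (Fintype.card X) else 0

lemma Orthonormal.star_dotProduct_eq_ite {X Y : Type*} [Fintype X] [DecidableEq Y]
    {v : Y → X → ℂ} (hv : Orthonormal ℂ fun y => WithLp.toLp 2 (v y)) (y y' : Y) :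
    star (v y) ⬝ᵥ v y' = if y = y' then 1 else 0 := by
  rw [dotProduct_comm, ← EuclideanSpace.inner_toLp_toLp]
  exact orthonormal_iff_ite.mp hv y y'

section RankOneSum

variable {X Y : Type*} [Fintype Y]

noncomputable def rankOneSum (v : Y → X → ℂ) (c : Y → ℝ) : Matrix X X ℂ :=
  ∑ y, c y • vecMulVec (v y) (star (v y))

lemma rankOneSum_isHermitian (v : Y → X → ℂ) (c : Y → ℝ) : (rankOneSum v c).IsHermitian := by
  simp only [IsHermitian, rankOneSum, conjTranspose_sum, conjTranspose_smul, star_trivial,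
    conjTranspose_vecMulVec, star_star]

lemma rankOneSum_smul {v : Y → X → ℂ} (a c : Y → ℝ) :
    rankOneSum (fun y => a y • v y) c = rankOneSum v fun y => a y ^ 2 * c y := by
  simp only [rankOneSum, star_smul, star_trivial, smul_vecMulVec, vecMulVec_smul, smul_smul]
  congr! 2
  ring

variable [Fintype X]

lemma rankOneSum_posSemidef (v : Y → X → ℂ) {c : Y → ℝ} (hc : 0 ≤ c) :
    (rankOneSum v c).PosSemidef :=
  posSemidef_sum _ fun y _ => (posSemidef_vecMulVec_self_star (v y)).smul (hc y)

lemma trace_mul_rankOneSum_one (M : Matrix X X ℂ) (v : Y → X → ℂ) :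
    (M * rankOneSum v 1).trace = ∑ y, star (v y) ⬝ᵥ M *ᵥ v y := by
  simp only [rankOneSum, Pi.one_apply, one_smul, Matrix.mul_sum, trace_sum, mul_vecMulVec,
    trace_vecMulVec, dotProduct_comm]

lemma re_star_dotProduct_rankOneSum_mulVec (v : Y → X → ℂ) (c : Y → ℝ) (w : X → ℂ) :
    (star w ⬝ᵥ rankOneSum v c *ᵥ w).re = ∑ y, c y * ‖star (v y) ⬝ᵥ w‖ ^ 2 := by
  simp only [rankOneSum, sum_mulVec, smul_mulVec, vecMulVec_mulVec, dotProduct_sum,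
    dotProduct_smul, op_smul_eq_smul, smul_eq_mul, Complex.re_sum]
  refine Finset.sum_congr rfl fun y _ => ?_
  rw [star_dotProduct w, Complex.real_smul, Complex.re_ofReal_mul, Complex.star_def,
    Complex.mul_conj, Complex.ofReal_re, Complex.normSq_eq_norm_sq]

variable [DecidableEq Y] {v : Y → X → ℂ}

lemma rankOneSum_mulVec (hv : Orthonormal ℂ fun y => WithLp.toLp 2 (v y))
    (c : Y → ℝ) (y : Y) : rankOneSum v c *ᵥ v y = c y • v y := by
  simp only [rankOneSum, sum_mulVec, smul_mulVec, vecMulVec_mulVec, hv.star_dotProduct_eq_ite]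
  simp

lemma rankOneSum_mul_rankOneSum (hv : Orthonormal ℂ fun y => WithLp.toLp 2 (v y))
    (c d : Y → ℝ) : rankOneSum v c * rankOneSum v d = rankOneSum v (c * d) := by
  conv_lhs => arg 2; rw [rankOneSum]
  simp only [Matrix.mul_sum, Matrix.mul_smul, mul_vecMulVec, rankOneSum_mulVec hv, smul_vecMulVec,
    smul_smul]
  simp only [rankOneSum, Pi.mul_apply, mul_comm]

end RankOneSum

section MatrixSqrt

open scoped MatrixOrder

variable {n : Type*} [Fintype n] [DecidableEq n] {A : Matrix n n ℂ}

lemma msqrt_eq_cfcSqrt (hA : A.PosSemidef) : msqrt A = CFC.sqrt A := by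
  rw [msqrt, dif_pos hA, CFC.sqrt_eq_cfc, cfc_nnreal_eq_real _ A hA.nonneg, hA.1.cfc_eq]
  simp only [IsHermitian.cfc, Unitary.conjStarAlgAut_apply, Real.sqrt.eq_1]
  rfl

lemma msqrt_posSemidef (hA : A.PosSemidef) : (msqrt A).PosSemidef := by
  rw [msqrt_eq_cfcSqrt hA, ← nonneg_iff_posSemidef]
  exact CFC.sqrt_nonneg A

lemma msqrt_mul_self (hA : A.PosSemidef) : msqrt A * msqrt A = A := by
  rw [msqrt_eq_cfcSqrt hA]
  exact CFC.sqrt_mul_sqrt_self A hA.nonneg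

lemma msqrt_eq_of_mul_self_eq {B : Matrix n n ℂ} (hB : B.PosSemidef) (hBA : B * B = A) :
    msqrt A = B := by
  have hA : A.PosSemidef := by
    simpa [hB.isHermitian.eq, hBA] using posSemidef_conjTranspose_mul_self B
  rw [msqrt_eq_cfcSqrt hA]
  exact CFC.sqrt_unique hBA hB.nonneg

end MatrixSqrt

lemma re_star_dotProduct_mulVec_sq_le {n : Type*} [Fintype n] (T : Matrix n n ℂ) (u : n → ℂ) :
    (star u ⬝ᵥ T *ᵥ u).re ^ 2 ≤ (star u ⬝ᵥ u).re * (star u ⬝ᵥ (Tᴴ * T) *ᵥ u).re := by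
  have h := inner_mul_inner_self_le (𝕜 := ℂ) (WithLp.toLp 2 u) (WithLp.toLp 2 (T *ᵥ u))
  have hTu : T *ᵥ u ⬝ᵥ star u = star u ⬝ᵥ T *ᵥ u := dotProduct_comm _ _
  have hTuTu : T *ᵥ u ⬝ᵥ star (T *ᵥ u) = star u ⬝ᵥ (Tᴴ * T) *ᵥ u := by
    rw [dotProduct_comm, star_mulVec, ← dotProduct_mulVec, mulVec_mulVec]
  simp only [EuclideanSpace.inner_toLp_toLp] at h
  rw [dotProduct_star u (T *ᵥ u), hTu, norm_star, hTuTu, dotProduct_comm u] at h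
  calc (star u ⬝ᵥ T *ᵥ u).re ^ 2 ≤ ‖star u ⬝ᵥ T *ᵥ u‖ ^ 2 := by
        rw [← sq_abs]
        exact pow_le_pow_left₀ (abs_nonneg _) (Complex.abs_re_le_norm _) 2
    _ ≤ _ := by rw [sq]; exact h

lemma Matrix.IsHermitian.mul_eq_self_of_mul_self_mul_eq {n : Type*} [Fintype n] [DecidableEq n]
    {T P : Matrix n n ℂ} (hT : T.IsHermitian) (h : T * T * P = T * T) : T * P = T := by
  have hzero : (T * (1 - P))ᴴ * (T * (1 - P)) = 0 := by
    rw [conjTranspose_mul, hT.eq, Matrix.mul_assoc, ← Matrix.mul_assoc T, Matrix.mul_sub (T * T),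
      h, Matrix.mul_one, sub_self, Matrix.mul_zero]
  rw [conjTranspose_mul_self_eq_zero, Matrix.mul_sub, Matrix.mul_one, sub_eq_zero] at hzero
  exact hzero.symm

section Fidelity

variable {X Y : Type*} [Fintype X] [Fintype Y] [DecidableEq Y] {v : Y → X → ℂ}

lemma star_dotProduct_rankOneSum_mul_mul_rankOneSum_mulVec
    (hv : Orthonormal ℂ fun y => WithLp.toLp 2 (v y)) (c : Y → ℝ) (σ : Matrix X X ℂ)
    (y : Y) :
    star (v y) ⬝ᵥ (rankOneSum v c * σ * rankOneSum v c) *ᵥ v y =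
      (c y ^ 2 : ℝ) * (star (v y) ⬝ᵥ σ *ᵥ v y) := by
  have hleft : star (v y) ᵥ* rankOneSum v c = c y • star (v y) := by
    rw [← (rankOneSum_isHermitian v c).eq, ← star_mulVec, rankOneSum_mulVec hv, star_smul,
      star_trivial]
  rw [← mulVec_mulVec, ← mulVec_mulVec, rankOneSum_mulVec hv, dotProduct_mulVec, hleft,
    mulVec_smul, smul_dotProduct, dotProduct_smul, smul_smul, Complex.real_smul]
  push_cast
  ring

theorem fidelity_rankOneSum_sq_le [DecidableEq X]
    (hv : Orthonormal ℂ fun y => WithLp.toLp 2 (v y)) {p : Y → ℝ} (hp : 0 ≤ p)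
    (hp_sum : ∑ y, p y ≤ 1) {σ : Matrix X X ℂ} (hσ : σ.PosSemidef) :
    fidelity (rankOneSum v p) σ ^ 2 ≤ ∑ y, (star (v y) ⬝ᵥ σ *ᵥ v y).re := by
  set S := rankOneSum v fun y => √(p y)
  have hS : S.PosSemidef := rankOneSum_posSemidef v fun y => Real.sqrt_nonneg _
  have hSS : S * S = rankOneSum v p := by
    rw [rankOneSum_mul_rankOneSum hv]
    congr
    exact funext fun y => Real.mul_self_sqrt (hp y)
  set A := S * σ * S
  have hA : A.PosSemidef := by
    simpa [hS.isHermitian.eq] using hσ.conjTranspose_mul_mul_same S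
  set T := msqrt A
  have hT : T.PosSemidef := msqrt_posSemidef hA
  have hTP : T * rankOneSum v 1 = T := by
    refine hT.isHermitian.mul_eq_self_of_mul_self_mul_eq ?_
    rw [msqrt_mul_self hA, Matrix.mul_assoc, rankOneSum_mul_rankOneSum hv, mul_one]
  have hquad (y : Y) :
      (star (v y) ⬝ᵥ T *ᵥ v y).re ^ 2 ≤ p y * (star (v y) ⬝ᵥ σ *ᵥ v y).re := by
    have h := re_star_dotProduct_mulVec_sq_le T (v y)
    rwa [hv.star_dotProduct_eq_ite, if_pos rfl, Complex.one_re, one_mul, hT.isHermitian.eq,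
      msqrt_mul_self hA, star_dotProduct_rankOneSum_mul_mul_rankOneSum_mulVec hv,
      Complex.re_ofReal_mul, Real.sq_sqrt (hp y)] at h
  have hσ_nonneg (y : Y) : 0 ≤ (star (v y) ⬝ᵥ σ *ᵥ v y).re :=
    (Complex.nonneg_iff.mp (hσ.dotProduct_mulVec_nonneg (v y))).1
  have hfid : fidelity (rankOneSum v p) σ = ∑ y, (star (v y) ⬝ᵥ T *ᵥ v y).re := by
    rw [fidelity, msqrt_eq_of_mul_self_eq hS hSS, ← Complex.re_sum, ← trace_mul_rankOneSum_one,
      hTP]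
  rw [hfid]
  calc (∑ y, (star (v y) ⬝ᵥ T *ᵥ v y).re) ^ 2
      ≤ (∑ y, p y) * ∑ y, (star (v y) ⬝ᵥ σ *ᵥ v y).re :=
        Finset.sum_sq_le_sum_mul_sum_of_sq_le_mul _ (fun y _ => hp y) (fun y _ => hσ_nonneg y)
          fun y _ => hquad y
    _ ≤ ∑ y, (star (v y) ⬝ᵥ σ *ᵥ v y).re :=
        mul_le_of_le_one_left (Finset.sum_nonneg fun y _ => hσ_nonneg y) hp_sum

end Fidelity

section Fibers

open Finset

variable {X Y : Type*} [Fintype X] [DecidableEq Y]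

def fiberIndicator (f : X → Y) (y : Y) : X → ℂ := fun x => if f x = y then 1 else 0

lemma star_fiberIndicator_dotProduct (f f' : X → Y) (y y' : Y) :
    star (fiberIndicator f y) ⬝ᵥ fiberIndicator f' y' = #{x | f x = y ∧ f' x = y'} := by
  simp only [fiberIndicator, dotProduct, Pi.star_apply, apply_ite star, star_one, star_zero,
    ite_mul, one_mul, zero_mul, ← ite_and]
  rw [sum_boole]

lemma card_fiber_pos {f : X → Y} (hf : Function.Surjective f) (y : Y) : 0 < #{x | f x = y} := by
  obtain ⟨x, hx⟩ := hf y
  exact card_pos.mpr ⟨x, by simp [hx]⟩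

noncomputable def fiberState (f : X → Y) (y : Y) : X → ℂ :=
  (√(#{x | f x = y} : ℝ))⁻¹ • fiberIndicator f y

lemma orthonormal_fiberState {f : X → Y} (hf : Function.Surjective f) :
    Orthonormal ℂ fun y => WithLp.toLp 2 (fiberState f y) := by
  refine orthonormal_iff_ite.mpr fun y y' => ?_
  rw [EuclideanSpace.inner_toLp_toLp, dotProduct_comm, fiberState, fiberState, star_smul,
    star_trivial, smul_dotProduct, dotProduct_smul, star_fiberIndicator_dotProduct]
  split_ifs with h
  · subst h
    have hcard : 0 < (#{x | f x = y} : ℝ) := by exact_mod_cast card_fiber_pos hf y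
    have h1 : (√(#{x | f x = y} : ℝ))⁻¹ * ((√(#{x | f x = y} : ℝ))⁻¹ * #{x | f x = y}) = 1 := by
      rw [← mul_assoc, ← mul_inv, Real.mul_self_sqrt hcard.le, inv_mul_cancel₀ hcard.ne']
    simp only [and_self, Complex.real_smul]
    exact_mod_cast h1
  · have : #{x | f x = y ∧ f x = y'} = 0 := by
      simp only [card_eq_zero, filter_eq_empty_iff]
      exact fun x _ ⟨hy, hy'⟩ => h (hy.symm.trans hy')
    simp [this]

variable [Fintype Y]

lemma hidingState_eq_rankOneSum (f : X → Y) :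
    hidingState f = rankOneSum (fiberIndicator f) fun _ => (Fintype.card X : ℝ)⁻¹ := by
  ext x x'
  simp [hidingState, rankOneSum, fiberIndicator, Matrix.sum_apply, vecMulVec_apply]

lemma hidingState_posSemidef (f : X → Y) : (hidingState f).PosSemidef := by
  rw [hidingState_eq_rankOneSum]
  exact rankOneSum_posSemidef _ fun _ => inv_nonneg.mpr (Nat.cast_nonneg _)

lemma hidingState_eq_rankOneSum_fiberState {f : X → Y} (hf : Function.Surjective f) :
    hidingState f = rankOneSum (fiberState f) fun y => #{x | f x = y} / (Fintype.card X : ℝ) := by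
  unfold fiberState
  rw [hidingState_eq_rankOneSum, rankOneSum_smul]
  congr 1
  funext y
  have hcard : (#{x | f x = y} : ℝ) ≠ 0 := by exact_mod_cast (card_fiber_pos hf y).ne'
  rw [inv_pow, Real.sq_sqrt (Nat.cast_nonneg _)]
  field_simp

lemma sum_card_fiber_div_card_le_one (f : X → Y) :
    ∑ y, (#{x | f x = y} : ℝ) / Fintype.card X ≤ 1 := by
  rw [← sum_div]
  have h : ∑ y, (#{x | f x = y} : ℝ) = Fintype.card X := by
    exact_mod_cast (card_eq_sum_card_fiberwise fun x _ => mem_univ (f x)).symm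
  exact h ▸ div_self_le_one _

lemma sum_re_star_fiberState_dotProduct_hidingState_mulVec (f f' : X → Y) :
    ∑ y, (star (fiberState f y) ⬝ᵥ hidingState f' *ᵥ fiberState f y).re =
      (1 / (Fintype.card X : ℝ)) * ∑ yy : Y × Y,
        (#{x | f x = yy.1 ∧ f' x = yy.2} : ℝ) ^ 2 / #{x | f x = yy.1} := by
  simp only [hidingState_eq_rankOneSum, re_star_dotProduct_rankOneSum_mulVec, fiberState,
    dotProduct_smul, star_fiberIndicator_dotProduct, Fintype.sum_prod_type, mul_sum]
  refine sum_congr rfl fun y _ => sum_congr rfl fun y' _ => ?_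
  have hswap : #{x | f' x = y' ∧ f x = y} = #{x | f x = y ∧ f' x = y'} := by simp_rw [and_comm]
  rw [norm_smul, Complex.norm_natCast, Real.norm_eq_abs, mul_pow, sq_abs, inv_pow,
    Real.sq_sqrt (Nat.cast_nonneg _), hswap]
  ring

end Fibers

theorem stmt_5_general {X Y : Type*} [Fintype X] [Fintype Y] [DecidableEq X] [DecidableEq Y]
    (f f' : X → Y) (hf : Function.Surjective f) :
    (fidelity (hidingState f) (hidingState f')) ^ 2 ≤
      (1 / (Fintype.card X : ℝ)) * ∑ yy : Y × Y,
        ((Finset.univ.filter (fun x : X => f x = yy.1 ∧ f' x = yy.2)).card : ℝ) ^ 2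
          / ((Finset.univ.filter (fun x : X => f x = yy.1)).card : ℝ) := by
  calc fidelity (hidingState f) (hidingState f') ^ 2
      ≤ ∑ y, (star (fiberState f y) ⬝ᵥ hidingState f' *ᵥ fiberState f y).re := by
        rw [hidingState_eq_rankOneSum_fiberState hf]
        exact fidelity_rankOneSum_sq_le (orthonormal_fiberState hf)
          (fun y => by positivity) (sum_card_fiber_div_card_le_one f) (hidingState_posSemidef f')
    _ = _ := sum_re_star_fiberState_dotProduct_hidingState_mulVec f f'

/-- For `f` surjective,
`F(ρ_f,ρ_{f'})² ≤ (1/|X|) Σ_{(y,y')} |L_f(y) ∩ L_{f'}(y')|²/|L_f(y)|`. -/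
theorem stmt_5 {X Y : Type*} [Fintype X] [Fintype Y] [DecidableEq X] [DecidableEq Y]
    [Nonempty X] [Nonempty Y] (f f' : X → Y) (hf : Function.Surjective f) :
    (fidelity (hidingState f) (hidingState f')) ^ 2 ≤
      (1 / (Fintype.card X : ℝ)) * ∑ yy : Y × Y,
        ((Finset.univ.filter (fun x : X => f x = yy.1 ∧ f' x = yy.2)).card : ℝ) ^ 2
          / ((Finset.univ.filter (fun x : X => f x = yy.1)).card : ℝ) :=
  stmt_5_general f f' hf
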